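/- Let I be a set, let 𝓕 be a family of finite subsets of I, and let A = {χ_F : F ∈ 𝓕} ⊆ c₀(I), where χ_F denotes the characteristic function of F. Suppose there exist a real Hilbert space H, an orthonormal family (h_x)_{x∈A} in H, and a bounded linear operator T : H → c₀(I) with T(h_x) = x for every x ∈ A. Then A is uniformly weakly null in c₀(I). -/

import Mathlib

open scoped Classical

open ZeroAtInfty

/-!
If `‖f‖ ≤ 1` then `f ∘ T` is a functional of norm at most `‖T‖` on `H` taking the value `f x` at
`h x`. By Bessel's inequality for the orthonormal family `h`, at most `‖T‖² / ε²` of these values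
exceed `ε` in absolute value, a bound independent of `f`.
-/

theorem Set.encard_le_of_forall_finset_card_le {α : Type*} {s : Set α} {n : ℕ}
    (h : ∀ t : Finset α, ↑t ⊆ s → t.card ≤ n) : s.encard ≤ n := by
  by_contra! hlt
  obtain ⟨t, hts, htc⟩ := Set.exists_subset_encard_eq (Order.add_one_le_of_lt hlt)
  have htfin : t.Finite := Set.finite_of_encard_eq_coe htc
  have hcard : htfin.toFinset.card = n + 1 := by
    rw [← Nat.cast_inj (R := ℕ∞), ← htfin.encard_eq_coe_toFinset_card, htc]
    rfl
  have := h htfin.toFinset (by simpa using hts)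
  omega

section Bessel

variable {ι E : Type*} [NormedAddCommGroup E] [InnerProductSpace ℝ E] {v : ι → E}

-- Bessel's inequality, obtained by testing `φ` on `∑ φ (v i) • v i` rather than via Riesz.
theorem Orthonormal.sum_sq_apply_le (hv : Orthonormal ℝ v) (φ : StrongDual ℝ E) (s : Finset ι) :
    ∑ i ∈ s, φ (v i) ^ 2 ≤ ‖φ‖ ^ 2 := by
  set x := ∑ i ∈ s, φ (v i) • v i
  have hφx : φ x = ∑ i ∈ s, φ (v i) ^ 2 := by
    simp only [x, map_sum, map_smul, smul_eq_mul, sq]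
  have hx : ‖x‖ ^ 2 = ∑ i ∈ s, φ (v i) ^ 2 := by
    rw [← real_inner_self_eq_norm_sq, hv.inner_sum]
    simp only [conj_trivial, sq]
  have hle : φ x ≤ ‖φ‖ * ‖x‖ := (le_abs_self _).trans (φ.le_opNorm x)
  nlinarith [norm_nonneg φ, norm_nonneg x]

theorem Orthonormal.encard_setOf_lt_abs_apply_le (hv : Orthonormal ℝ v) {φ : StrongDual ℝ E}
    {M ε : ℝ} (hφ : ‖φ‖ ≤ M) (hε : 0 < ε) :
    {i | ε < |φ (v i)|}.encard ≤ ⌈M ^ 2 / ε ^ 2⌉₊ := by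
  refine Set.encard_le_of_forall_finset_card_le fun t ht => ?_
  have hcard : t.card * ε ^ 2 ≤ M ^ 2 :=
    calc t.card * ε ^ 2 = ∑ _i ∈ t, ε ^ 2 := by rw [Finset.sum_const, nsmul_eq_mul]
      _ ≤ ∑ i ∈ t, φ (v i) ^ 2 := Finset.sum_le_sum fun i hi => by
          rw [← sq_abs (φ (v i))]
          exact pow_le_pow_left₀ hε.le (ht hi).out.le 2
      _ ≤ ‖φ‖ ^ 2 := hv.sum_sq_apply_le φ t
      _ ≤ M ^ 2 := pow_le_pow_left₀ (norm_nonneg φ) hφ 2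
  exact_mod_cast (le_div_iff₀ (by positivity)).2 hcard |>.trans (Nat.le_ceil _)

end Bessel

theorem statement16_general {I : Type*} [TopologicalSpace I]
    (A : Set C₀(I, ℝ))
    (H : Type*) [NormedAddCommGroup H] [InnerProductSpace ℝ H]
    (h : A → H) (hON : Orthonormal ℝ h)
    (T : H →L[ℝ] C₀(I, ℝ)) (hT : ∀ x : A, T (h x) = (x : C₀(I, ℝ))) :
    ∀ ε : ℝ, 0 < ε → ∃ N : ℕ, ∀ f : C₀(I, ℝ) →L[ℝ] ℝ, ‖f‖ ≤ 1 →
      {x ∈ A | ε < |f x|}.encard ≤ (N : ℕ∞) := by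
  intro ε hε
  refine ⟨⌈‖T‖ ^ 2 / ε ^ 2⌉₊, fun f hf => ?_⟩
  have hfT : ‖f.comp T‖ ≤ ‖T‖ :=
    (f.opNorm_comp_le T).trans (mul_le_of_le_one_left (norm_nonneg T) hf)
  have hset : {x ∈ A | ε < |f x|} = Subtype.val '' {a : A | ε < |f.comp T (h a)|} := by
    ext x
    simp only [Set.mem_ofPred_eq, Set.mem_image, ContinuousLinearMap.comp_apply, hT]
    exact ⟨fun ⟨hxA, hx⟩ => ⟨⟨x, hxA⟩, hx, rfl⟩, by rintro ⟨a, ha, rfl⟩; exact ⟨a.2, ha⟩⟩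
  rw [hset]
  exact (Set.encard_image_le _ _).trans (hON.encard_setOf_lt_abs_apply_le hfT hε)

/-- Let `𝓕` be a family of finite subsets of `I` (with `I` discrete) and
`A = {χ_F : F ∈ 𝓕} ⊆ c₀(I)`. If there are a real Hilbert space `H`, an orthonormal family
`(h_x)_{x ∈ A}` in `H` and a bounded linear operator `T : H → c₀(I)` with `T(h_x) = x` for all
`x ∈ A`, then `A` is uniformly weakly null in `c₀(I)`. -/
theorem statement16 {I : Type*} [TopologicalSpace I] [DiscreteTopology I]
    (F : Set (Finset I)) (A : Set C₀(I, ℝ))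
    (hA : A = {x : C₀(I, ℝ) | ∃ S ∈ F, ∀ i, x i = if i ∈ S then 1 else 0})
    (H : Type*) [NormedAddCommGroup H] [InnerProductSpace ℝ H] [CompleteSpace H]
    (h : A → H) (hON : Orthonormal ℝ h)
    (T : H →L[ℝ] C₀(I, ℝ)) (hT : ∀ x : A, T (h x) = (x : C₀(I, ℝ))) :
    ∀ ε : ℝ, 0 < ε → ∃ N : ℕ, ∀ f : C₀(I, ℝ) →L[ℝ] ℝ, ‖f‖ ≤ 1 →
      {x ∈ A | ε < |f x|}.encard ≤ (N : ℕ∞) :=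
  statement16_general A H h hON T hT
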